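/- For n = 1, the space of vectors in ℂ[x] ⊗ ℂ³ annihilated by the single positive odd root operator X_{−δ} is exactly 3-dimensional, spanned by 1 ⊗ v₂, 1 ⊗ v₀ + √2·x ⊗ v₂, and −√2·x ⊗ v₀ + 1 ⊗ v₁ + x² ⊗ v₂. -/

import Mathlib

open Finsupp

noncomputable section

abbrev V (n : ℕ) : Type := ((Fin n →₀ ℕ) × Fin (2*n+1)) →₀ ℂ

def b {n : ℕ} (k : Fin n →₀ ℕ) (j : Fin (2*n+1)) : V n := Finsupp.single (k, j) 1

def mkOp {n : ℕ} (g : (Fin n →₀ ℕ) × Fin (2*n+1) → V n) : V n →ₗ[ℂ] V n :=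
  Finsupp.lsum ℂ fun a => LinearMap.toSpanSingleton ℂ (V n) (g a)

def deg {n : ℕ} (k : Fin n →₀ ℕ) : ℕ := k.sum fun _ v => v

def sgn {n : ℕ} (k : Fin n →₀ ℕ) : ℂ := (-1) ^ deg k

def rt2 : ℂ := Real.sqrt 2

def idx0 {n : ℕ} : Fin (2*n+1) := ⟨0, by omega⟩

def idxLo {n : ℕ} (i : Fin n) : Fin (2*n+1) := ⟨i.1+1, by have := i.isLt; omega⟩

def idxHi {n : ℕ} (i : Fin n) : Fin (2*n+1) := ⟨n+i.1+1, by have := i.isLt; omega⟩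

/-- `T_i` applied to `x^k ⊗ v_j` (without the parity sign). -/
def TpApp {n : ℕ} (i : Fin n) (k : Fin n →₀ ℕ) (j : Fin (2*n+1)) : V n :=
  if j = idx0 then b k (idxLo i) else if j = idxHi i then b k idx0 else 0

/-- `T_{-i}` applied to `x^k ⊗ v_j` (without the parity sign). -/
def TmApp {n : ℕ} (i : Fin n) (k : Fin n →₀ ℕ) (j : Fin (2*n+1)) : V n :=
  if j = idx0 then -(b k (idxHi i)) else if j = idxLo i then b k idx0 else 0

/-- The action of the odd root vector `X_{δ_j}` on `ℂ[x] ⊗ ℂ^{1|2n}`. -/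
def Xplus {n : ℕ} (jj : Fin n) : V n →ₗ[ℂ] V n :=
  mkOp fun p => rt2⁻¹ • b (p.1 + Finsupp.single jj 1) p.2 + sgn p.1 • TpApp jj p.1 p.2

/-- The action of the odd root vector `X_{-δ_i}` on `ℂ[x] ⊗ ℂ^{1|2n}`. -/
def Xminus {n : ℕ} (i : Fin n) : V n →ₗ[ℂ] V n :=
  mkOp fun p => (rt2⁻¹ * (p.1 i : ℂ)) • b (p.1 - Finsupp.single i 1) p.2
    + sgn p.1 • TmApp i p.1 p.2

/-- `Γ_{w₂} = 1⊗1 + √2 ∑ ∂_i ⊗ T_i - √2 ∑ x_i ⊗ T_{-i}`. -/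
def Gamma2 {n : ℕ} : V n →ₗ[ℂ] V n :=
  mkOp fun p => b p.1 p.2
    + rt2 • ∑ i : Fin n, (sgn p.1 * (p.1 i : ℂ)) • TpApp i (p.1 - Finsupp.single i 1) p.2
    - rt2 • ∑ i : Fin n, sgn p.1 • TmApp i (p.1 + Finsupp.single i 1) p.2

/-- `Γ_{w₁} = 1⊗1 - √2 ∑ ∂_i ⊗ T_i + √2 ∑ x_i ⊗ T_{-i}`. -/
def Gamma1 {n : ℕ} : V n →ₗ[ℂ] V n :=
  mkOp fun p => b p.1 p.2
    - rt2 • ∑ i : Fin n, (sgn p.1 * (p.1 i : ℂ)) • TpApp i (p.1 - Finsupp.single i 1) p.2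
    + rt2 • ∑ i : Fin n, sgn p.1 • TmApp i (p.1 + Finsupp.single i 1) p.2

/-! The kernel equation of `X_{-δ}` at `x^k ⊗ v_j` expresses the coefficient of `x^(k+1) ⊗ v_j`
through coefficients of `x^k`, because the derivative term carries the nonzero factor
`(k+1)/√2`. So an element of the kernel is determined by its constant terms, and the three given
vectors, which lie in the kernel and have the standard basis of `ℂ³` as constant terms, form a
basis of it. -/

lemma rt2_ne_zero : rt2 ≠ 0 := by
  simp [rt2]

lemma rt2_mul_rt2 : rt2 * rt2 = 2 := by
  rw [rt2, ← Complex.ofReal_mul, Real.mul_self_sqrt zero_le_two, Complex.ofReal_ofNat]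

section

variable {n : ℕ}

lemma sgn_zero : sgn (0 : Fin n →₀ ℕ) = 1 := by
  rw [sgn, deg, Finsupp.sum_zero_index, pow_zero]

lemma sgn_single (i : Fin n) (m : ℕ) : sgn (Finsupp.single i m) = (-1) ^ m := by
  rw [sgn, deg, Finsupp.sum_single_index rfl]

lemma b_apply (k k' : Fin n →₀ ℕ) (j j' : Fin (2*n+1)) :
    b k j (k', j') = if k = k' ∧ j = j' then 1 else 0 := by
  simp [b, Finsupp.single_apply]

lemma mkOp_single (g : (Fin n →₀ ℕ) × Fin (2*n+1) → V n) (a : (Fin n →₀ ℕ) × Fin (2*n+1))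
    (c : ℂ) :
    mkOp g (Finsupp.single a c) = c • g a := by
  simp [mkOp]

lemma idx0_ne_idxLo (i : Fin n) : (idx0 : Fin (2*n+1)) ≠ idxLo i := by
  simp [idx0, idxLo, Fin.ext_iff]

lemma idx0_ne_idxHi (i : Fin n) : (idx0 : Fin (2*n+1)) ≠ idxHi i := by
  simp [idx0, idxHi, Fin.ext_iff]

lemma idxLo_ne_idxHi (i : Fin n) : (idxLo i : Fin (2*n+1)) ≠ idxHi i := by
  simp [idxLo, idxHi, Fin.ext_iff, i.pos.ne']

lemma natCast_mul_b_tsub_apply (i : Fin n) (m k : Fin n →₀ ℕ) (j j' : Fin (2*n+1)) :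
    (m i : ℂ) * b (m - Finsupp.single i 1) j (k, j')
      = if (m, j) = (k + Finsupp.single i 1, j') then (k i + 1 : ℂ) else 0 := by
  rcases Nat.eq_zero_or_pos (m i) with hm | hm
  · have : m ≠ k + Finsupp.single i 1 := fun h => by simp [h] at hm
    simp [hm, this]
  · have hle : Finsupp.single i 1 ≤ m := Finsupp.single_le_iff.mpr hm
    simp only [b_apply, Prod.mk.injEq, tsub_eq_iff_eq_add_of_le hle]
    split_ifs with h
    · simp [h.1]
    · simp

lemma sgn_mul_TmApp_apply (i : Fin n) (m k : Fin n →₀ ℕ) (j j' : Fin (2*n+1)) :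
    sgn m * TmApp i m j (k, j')
      = (if (m, j) = (k, idxLo i) ∧ j' = idx0 then sgn k else 0)
        - (if (m, j) = (k, idx0) ∧ j' = idxHi i then sgn k else 0) := by
  have := idx0_ne_idxLo i
  have := idx0_ne_idxHi i
  have := idxLo_ne_idxHi i
  unfold TmApp
  split_ifs <;> simp_all [b_apply] <;> grind

lemma Xminus_b (i : Fin n) (k : Fin n →₀ ℕ) (j : Fin (2*n+1)) :
    Xminus i (b k j) = (rt2⁻¹ * k i) • b (k - Finsupp.single i 1) j + sgn k • TmApp i k j := by
  rw [b, Xminus, mkOp_single, one_smul]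

theorem Xminus_apply (i : Fin n) (f : V n) (k : Fin n →₀ ℕ) (j : Fin (2*n+1)) :
    Xminus i f (k, j)
      = rt2⁻¹ * (k i + 1) * f (k + Finsupp.single i 1, j)
        + (if j = idx0 then sgn k * f (k, idxLo i) else 0)
        - (if j = idxHi i then sgn k * f (k, idx0) else 0) := by
  induction f using Finsupp.induction_linear with
  | zero => simp
  | add f g hf hg =>
    simp only [map_add, Finsupp.add_apply, hf, hg]
    split_ifs <;> ring
  | single a c =>
    obtain ⟨m, j₀⟩ := a
    have hD := natCast_mul_b_tsub_apply i m k j₀ j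
    have hT := sgn_mul_TmApp_apply i m k j₀ j
    simp only [Xminus, mkOp_single, Finsupp.smul_apply, Finsupp.add_apply, smul_eq_mul,
      Finsupp.single_apply] at hD hT ⊢
    rw [mul_assoc rt2⁻¹, hD, hT]
    split_ifs <;> simp_all <;> ring

theorem eq_zero_of_Xminus_eq_zero {i : Fin n} {f : V n} (hf : Xminus i f = 0)
    (h₀ : ∀ k j, k i = 0 → f (k, j) = 0) : f = 0 := by
  suffices h : ∀ m k j, k i = m → f (k, j) = 0 from Finsupp.ext fun ⟨k, j⟩ => h _ k j rfl
  intro m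
  induction m with
  | zero => exact h₀
  | succ m ih =>
    intro k j hk
    have hle : Finsupp.single i 1 ≤ k := Finsupp.single_le_iff.mpr (by omega)
    set k' := k - Finsupp.single i 1
    have hk' : k' i = m := by simp [k', hk]
    have hrec := Xminus_apply i f k' j
    rw [tsub_add_cancel_of_le hle, hf, ih k' _ hk', ih k' _ hk'] at hrec
    have hc : rt2⁻¹ * ((m : ℂ) + 1) ≠ 0 := by
      simp [rt2_ne_zero, Nat.cast_add_one_ne_zero]
    simpa [hk', hc] using hrec.symm

end

/-- `kerVec j` is the element of the kernel with constant term `1 ⊗ v_j`. -/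
def kerVec : Fin (2*1+1) → V 1 :=
  ![b 0 idx0 + rt2 • b (Finsupp.single 0 1) (idxHi 0),
    (-rt2) • b (Finsupp.single 0 1) idx0 + b 0 (idxLo 0) + b (Finsupp.single 0 2) (idxHi 0),
    b 0 (idxHi 0)]

lemma Xminus_kerVec (j : Fin (2*1+1)) : Xminus 0 (kerVec j) = 0 := by
  have hinv : rt2⁻¹ * 2 = rt2 := by
    rw [← rt2_mul_rt2, inv_mul_cancel_left₀ rt2_ne_zero]
  fin_cases j <;> simp [kerVec, Xminus_b, TmApp, sgn_zero, sgn_single, smul_smul, hinv,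
    rt2_ne_zero, ← Finsupp.single_tsub, (idx0_ne_idxHi _).symm, (idxLo_ne_idxHi _).symm,
    (idx0_ne_idxLo _).symm]

lemma kerVec_apply_zero (j j' : Fin (2*1+1)) :
    kerVec j (0, j') = if j = j' then 1 else 0 := by
  fin_cases j <;> fin_cases j' <;> simp [kerVec, b_apply, idx0, idxLo, idxHi]

theorem eq_sum_kerVec {f : V 1} (hf : Xminus 0 f = 0) :
    f = ∑ j, f (0, j) • kerVec j := by
  refine sub_eq_zero.mp (eq_zero_of_Xminus_eq_zero (i := 0) ?_ fun k j hk => ?_)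
  · simp [hf, Xminus_kerVec]
  · obtain rfl : k = 0 := Finsupp.ext fun i => by simp [Subsingleton.elim i 0, hk]
    simp [Finset.sum_apply, kerVec_apply_zero]

theorem ker_Xminus_eq_span_kerVec :
    LinearMap.ker (Xminus (0 : Fin 1)) = Submodule.span ℂ (Set.range kerVec) := by
  refine le_antisymm (fun f hf => ?_) (Submodule.span_le.mpr ?_)
  · rw [eq_sum_kerVec hf]
    exact Submodule.sum_mem _ fun j _ => Submodule.smul_mem _ _ (Submodule.subset_span ⟨j, rfl⟩)
  · rintro _ ⟨j, rfl⟩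
    exact Xminus_kerVec j

theorem linearIndependent_kerVec : LinearIndependent ℂ kerVec := by
  refine Fintype.linearIndependent_iff.mpr fun c hc j => ?_
  simpa [Finset.sum_apply, kerVec_apply_zero] using congr($hc (0, j))

/-- For `n = 1`, the kernel of `X_{-δ}` is exactly the 3-dimensional span of
`1 ⊗ v₂`, `1 ⊗ v₀ + √2 x ⊗ v₂`, and `-√2 x ⊗ v₀ + 1 ⊗ v₁ + x² ⊗ v₂`. -/
theorem stmt10 :
    LinearMap.ker (Xminus (n := 1) 0) =
      Submodule.span ℂ ({b 0 (idxHi 0),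
        b 0 idx0 + rt2 • b (Finsupp.single 0 1) (idxHi 0),
        (-rt2) • b (Finsupp.single 0 1) idx0 + b 0 (idxLo 0)
          + b (Finsupp.single 0 2) (idxHi 0)} : Set (V 1)) ∧
    Module.finrank ℂ ↥(LinearMap.ker (Xminus (n := 1) 0)) = 3 := by
  have hrange : Set.range kerVec = ({b 0 (idxHi 0),
      b 0 idx0 + rt2 • b (Finsupp.single 0 1) (idxHi 0),
      (-rt2) • b (Finsupp.single 0 1) idx0 + b 0 (idxLo 0)
        + b (Finsupp.single 0 2) (idxHi 0)} : Set (V 1)) := by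
    ext v
    simp only [kerVec, Matrix.range_cons, Matrix.range_empty, Set.union_empty,
      Set.singleton_union, Set.mem_insert_iff, Set.mem_singleton_iff]
    tauto
  rw [ker_Xminus_eq_span_kerVec, ← hrange, finrank_span_eq_card linearIndependent_kerVec]
  exact ⟨rfl, rfl⟩
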